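/- For integers n₁, n₂ ≥ 5, and integers i₁, i₂, k' with i₁ > 1, 4 < i₂ < n₂, i₂ - i₁ ≥ 2, 3 ≤ k' ≤ n₂ - 2, and k' ≠ n₁, n₂, the lattice L₂(n₁,n₂)[k', i₁, i₂] contains a sublattice isomorphic to the pentagon lattice N₅; in particular, it is not modular. -/

import Mathlib

/-!
The added relation `a_{i₁} < b_{k'}` puts `a_1` below `b_{k'}`, while `a_1` stays incomparable
with `b_1` and `b_{k'-1}`: both have join `b_{k'}` with `a_1` and meet `s`. Hence
`s, a_1, b_1, b_{k'-1}, b_{k'}` form a pentagon, and the triple `b_1 ≤ b_{k'-1}`, `a_1` violates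
the modular law. Closure of the five elements under join and meet holds because, as `i₁ < i₂`,
join and meet return the larger and the smaller element on comparable pairs.
-/

/-- The underlying set of `L₂(n₁,n₂)[k',i₁,i₂]`: bottom `s`, top `t`, and two chains
(`a i` stands for `a_{i+1}`, `b j` for `b_{j+1}`). -/
inductive PElem (n1 n2 : ℕ) : Type where
  | s : PElem n1 n2
  | a : Fin n1 → PElem n1 n2
  | b : Fin n2 → PElem n1 n2
  | t : PElem n1 n2
deriving DecidableEq

namespace PElem

variable {n1 n2 : ℕ}

/-- 1-based index. -/
def idx {k : ℕ} (i : Fin k) : ℕ := i.val + 1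

/-- `a_j` (1-based), with `a_0 = s` and `a_j = t` for `j > n1`. -/
def aP (n1 n2 j : ℕ) : PElem n1 n2 :=
  if _h0 : j = 0 then .s else if h : j ≤ n1 then .a ⟨j - 1, by omega⟩ else .t

/-- `b_j` (1-based), with `b_0 = s` and `b_j = t` for `j > n2`. -/
def bP (n1 n2 j : ℕ) : PElem n1 n2 :=
  if _h0 : j = 0 then .s else if h : j ≤ n2 then .b ⟨j - 1, by omega⟩ else .t

/-- The order of `L₂(n₁,n₂)[k',i₁,i₂]`: the order of `L₂(n₁,n₂)` together with the
added relations `a_{i₁} < b_{k'}` and `b_{k'} < a_{i₂}`, and its order-theoretic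
closure. -/
def ple (i1 i2 k' : ℕ) : PElem n1 n2 → PElem n1 n2 → Prop
  | .s, _ => True
  | _, .t => True
  | .t, _ => False
  | _, .s => False
  | .a i, .a j => i ≤ j
  | .b i, .b j => i ≤ j
  | .a i, .b j => idx i ≤ i1 ∧ k' ≤ idx j
  | .b j, .a i => idx j ≤ k' ∧ i2 ≤ idx i

/-- The join of `L₂(n₁,n₂)[k',i₁,i₂]`. -/
def psup (i1 i2 k' : ℕ) : PElem n1 n2 → PElem n1 n2 → PElem n1 n2
  | .s, x => x
  | x, .s => x
  | .t, _ => .t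
  | _, .t => .t
  | .a i, .a j => .a (max i j)
  | .b i, .b j => .b (max i j)
  | .a i, .b j =>
      if idx i ≤ i1 ∧ k' ≤ idx j then .b j
      else if idx j ≤ k' ∧ i2 ≤ idx i then .a i
      else if idx i ≤ i1 ∧ idx j < k' then bP n1 n2 k'
      else if idx i < i2 ∧ idx j ≤ k' then aP n1 n2 i2
      else .t
  | .b j, .a i =>
      if idx i ≤ i1 ∧ k' ≤ idx j then .b j
      else if idx j ≤ k' ∧ i2 ≤ idx i then .a i
      else if idx i ≤ i1 ∧ idx j < k' then bP n1 n2 k'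
      else if idx i < i2 ∧ idx j ≤ k' then aP n1 n2 i2
      else .t

/-- The meet of `L₂(n₁,n₂)[k',i₁,i₂]`. -/
def pinf (i1 i2 k' : ℕ) : PElem n1 n2 → PElem n1 n2 → PElem n1 n2
  | .s, _ => .s
  | _, .s => .s
  | .t, x => x
  | x, .t => x
  | .a i, .a j => .a (min i j)
  | .b i, .b j => .b (min i j)
  | .a i, .b j =>
      if idx i ≤ i1 ∧ k' ≤ idx j then .a i
      else if idx j ≤ k' ∧ i2 ≤ idx i then .b j
      else if i2 ≤ idx i ∧ k' < idx j then bP n1 n2 k'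
      else if i1 < idx i ∧ k' ≤ idx j then aP n1 n2 i1
      else .s
  | .b j, .a i =>
      if idx i ≤ i1 ∧ k' ≤ idx j then .a i
      else if idx j ≤ k' ∧ i2 ≤ idx i then .b j
      else if i2 ≤ idx i ∧ k' < idx j then bP n1 n2 k'
      else if i1 < idx i ∧ k' ≤ idx j then aP n1 n2 i1
      else .s

end PElem

namespace PElem

variable {n1 n2 i1 i2 k' : ℕ}

theorem psup_comm (x y : PElem n1 n2) : psup i1 i2 k' x y = psup i1 i2 k' y x := by
  cases x <;> cases y <;> simp only [psup, max_comm]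

theorem pinf_comm (x y : PElem n1 n2) : pinf i1 i2 k' x y = pinf i1 i2 k' y x := by
  cases x <;> cases y <;> simp only [pinf, min_comm]

theorem ple_refl (x : PElem n1 n2) : ple i1 i2 k' x x := by
  cases x <;> simp [ple]

theorem psup_eq_right_of_ple (h12 : i1 < i2) {x y : PElem n1 n2} (h : ple i1 i2 k' x y) :
    psup i1 i2 k' x y = y := by
  cases x <;> cases y <;> simp_all [ple, psup, idx]
  omega

theorem pinf_eq_left_of_ple (h12 : i1 < i2) {x y : PElem n1 n2} (h : ple i1 i2 k' x y) :
    pinf i1 i2 k' x y = x := by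
  cases x <;> cases y <;> simp_all [ple, pinf, idx]
  omega

theorem psup_mem_and_pinf_mem_of_comparable (h12 : i1 < i2) {S : Set (PElem n1 n2)}
    {x y : PElem n1 n2} (hx : x ∈ S) (hy : y ∈ S) (h : ple i1 i2 k' x y ∨ ple i1 i2 k' y x) :
    psup i1 i2 k' x y ∈ S ∧ pinf i1 i2 k' x y ∈ S := by
  rcases h with hxy | hyx
  · rw [psup_eq_right_of_ple h12 hxy, pinf_eq_left_of_ple h12 hxy]
    exact ⟨hy, hx⟩
  · rw [psup_comm, pinf_comm, psup_eq_right_of_ple h12 hyx, pinf_eq_left_of_ple h12 hyx]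
    exact ⟨hx, hy⟩

theorem psup_pinf_closed_of_pentagon (h12 : i1 < i2) {v1 v2 v3 v4 : PElem n1 n2}
    (h14 : ple i1 i2 k' v1 v4) (h23 : ple i1 i2 k' v2 v3) (h24 : ple i1 i2 k' v2 v4)
    (h34 : ple i1 i2 k' v3 v4)
    (hsup2 : psup i1 i2 k' v1 v2 = v4) (hinf2 : pinf i1 i2 k' v1 v2 = .s)
    (hsup3 : psup i1 i2 k' v1 v3 = v4) (hinf3 : pinf i1 i2 k' v1 v3 = .s) :
    ∀ x ∈ ({.s, v1, v2, v3, v4} : Set (PElem n1 n2)),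
      ∀ y ∈ ({.s, v1, v2, v3, v4} : Set (PElem n1 n2)),
        psup i1 i2 k' x y ∈ ({.s, v1, v2, v3, v4} : Set (PElem n1 n2)) ∧
        pinf i1 i2 k' x y ∈ ({.s, v1, v2, v3, v4} : Set (PElem n1 n2)) := by
  intro x hx y hy
  have hx' := hx
  have hy' := hy
  simp only [Set.mem_insert_iff, Set.mem_singleton_iff] at hx' hy'
  -- every pair is comparable except `{v1, v2}` and `{v1, v3}`, whose join and meet are given
  rcases hx' with rfl | rfl | rfl | rfl | rfl <;> rcases hy' with rfl | rfl | rfl | rfl | rfl <;>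
  first
    | refine psup_mem_and_pinf_mem_of_comparable h12 hx hy ?_
      first
        | exact .inl trivial
        | exact .inr trivial
        | exact .inl (ple_refl _)
        | exact .inl ‹_›
        | exact .inr ‹_›
    | (simp [hsup2, hinf2, hsup3, hinf3]; done)
    | (rw [psup_comm, pinf_comm]; simp [hsup2, hinf2, hsup3, hinf3])

theorem not_modular_of_pentagon (h12 : i1 < i2) {v1 v2 v3 v4 : PElem n1 n2}
    (h23 : ple i1 i2 k' v2 v3) (h34 : ple i1 i2 k' v3 v4) (hne : v2 ≠ v3)
    (hsup2 : psup i1 i2 k' v1 v2 = v4) (hinf3 : pinf i1 i2 k' v1 v3 = .s) :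
    ¬ ∀ x y z : PElem n1 n2, ple i1 i2 k' x z →
      psup i1 i2 k' x (pinf i1 i2 k' y z) = pinf i1 i2 k' (psup i1 i2 k' x y) z := by
  intro hmod
  have h := hmod v2 v1 v3 h23
  rw [hinf3, psup_comm v2 .s, psup_eq_right_of_ple (x := .s) h12 trivial, psup_comm v2 v1, hsup2,
    pinf_comm v4 v3, pinf_eq_left_of_ple h12 h34] at h
  exact hne h

theorem bP_eq_b {j : ℕ} (h0 : 0 < j) (hj : j ≤ n2) :
    bP n1 n2 j = .b ⟨j - 1, by omega⟩ := by
  simp [bP, h0.ne', hj]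

theorem psup_a_b_of_lt {i : Fin n1} {j : Fin n2} (hi1 : idx i ≤ i1) (hi2 : idx i < i2)
    (hj : idx j < k') : psup i1 i2 k' (.a i) (.b j) = bP n1 n2 k' := by
  simp only [psup]
  rw [if_neg (by omega), if_neg (by omega), if_pos ⟨hi1, hj⟩]

theorem pinf_a_b_of_lt {i : Fin n1} {j : Fin n2} (hi : idx i < i2) (hj : idx j < k') :
    pinf i1 i2 k' (.a i) (.b j) = .s := by
  simp only [pinf]
  rw [if_neg (by omega), if_neg (by omega), if_neg (by omega), if_neg (by omega)]

end PElem

open PElem in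
theorem L2mod_pentagon_not_modular_general (n1 n2 i1 i2 k' : ℕ)
    (hn1 : 5 ≤ n1) (hi1 : 1 < i1)
    (hgap : i1 + 2 ≤ i2) (hk3 : 3 ≤ k') (hkn : k' ≤ n2 - 2) :
    (∃ v0 v1 v2 v3 v4 : PElem n1 n2,
      [v0, v1, v2, v3, v4].Pairwise (· ≠ ·) ∧
      ple i1 i2 k' v0 v1 ∧ ple i1 i2 k' v1 v4 ∧
      ple i1 i2 k' v0 v2 ∧ ple i1 i2 k' v2 v3 ∧ ple i1 i2 k' v3 v4 ∧
      psup i1 i2 k' v1 v2 = v4 ∧ pinf i1 i2 k' v1 v2 = v0 ∧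
      psup i1 i2 k' v1 v3 = v4 ∧ pinf i1 i2 k' v1 v3 = v0 ∧
      (∀ x ∈ ({v0, v1, v2, v3, v4} : Set (PElem n1 n2)),
        ∀ y ∈ ({v0, v1, v2, v3, v4} : Set (PElem n1 n2)),
          psup i1 i2 k' x y ∈ ({v0, v1, v2, v3, v4} : Set (PElem n1 n2)) ∧
          pinf i1 i2 k' x y ∈ ({v0, v1, v2, v3, v4} : Set (PElem n1 n2)))) ∧
    ¬ ∀ x y z : PElem n1 n2,
        ple i1 i2 k' x z →
          psup i1 i2 k' x (pinf i1 i2 k' y z) = pinf i1 i2 k' (psup i1 i2 k' x y) z := by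
  have h12 : i1 < i2 := by omega
  -- `Fin` indices are 0-based: `b'` is `b_{k'-1}` and `bk` is `b_{k'}`
  let a₁ : PElem n1 n2 := .a ⟨0, by omega⟩
  let b₁ : PElem n1 n2 := .b ⟨0, by omega⟩
  let b' : PElem n1 n2 := .b ⟨k' - 2, by omega⟩
  let bk : PElem n1 n2 := .b ⟨k' - 1, by omega⟩
  have hbk : bP n1 n2 k' = bk := bP_eq_b (by omega) (by omega)
  have ha₁ : idx (⟨0, by omega⟩ : Fin n1) ≤ i1 := by simp only [idx]; omega
  have hsup₁ : psup i1 i2 k' a₁ b₁ = bk :=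
    hbk ▸ psup_a_b_of_lt ha₁ (by omega) (by simp only [idx]; omega)
  have hsup' : psup i1 i2 k' a₁ b' = bk :=
    hbk ▸ psup_a_b_of_lt ha₁ (by omega) (by simp only [idx]; omega)
  have hinf₁ : pinf i1 i2 k' a₁ b₁ = .s := pinf_a_b_of_lt (by omega) (by simp only [idx]; omega)
  have hinf' : pinf i1 i2 k' a₁ b' = .s := pinf_a_b_of_lt (by omega) (by simp only [idx]; omega)
  have ha₁bk : ple i1 i2 k' a₁ bk := ⟨ha₁, by simp only [idx]; omega⟩
  have hb₁b' : ple i1 i2 k' b₁ b' := Fin.mk_le_mk.2 (Nat.zero_le _)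
  have hb₁bk : ple i1 i2 k' b₁ bk := Fin.mk_le_mk.2 (Nat.zero_le _)
  have hb'bk : ple i1 i2 k' b' bk := Fin.mk_le_mk.2 (by omega)
  have hb₁_ne_b' : b₁ ≠ b' := by simp [b₁, b']; omega
  refine ⟨⟨.s, a₁, b₁, b', bk, ?_, trivial, ha₁bk, trivial, hb₁b', hb'bk, hsup₁, hinf₁, hsup', hinf',
    psup_pinf_closed_of_pentagon h12 ha₁bk hb₁b' hb₁bk hb'bk hsup₁ hinf₁ hsup' hinf'⟩,
    not_modular_of_pentagon h12 hb₁b' hb'bk hb₁_ne_b' hsup₁ hinf'⟩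
  simp [a₁, b₁, b', bk]
  omega

open PElem in
/-- under the stated hypotheses, the lattice `L₂(n₁,n₂)[k',i₁,i₂]` contains
a sublattice (a 5-element subset closed under join and meet) isomorphic to the pentagon
`N₅`; in particular it is not modular. -/
theorem L2mod_pentagon_not_modular (n1 n2 i1 i2 k' : ℕ)
    (hn1 : 5 ≤ n1) (hn2 : 5 ≤ n2) (hi1 : 1 < i1) (hi2l : 4 < i2) (hi2r : i2 < n2)
    (hgap : i1 + 2 ≤ i2) (hk3 : 3 ≤ k') (hkn : k' ≤ n2 - 2) (hk1 : k' ≠ n1)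
    (hk2 : k' ≠ n2) :
    (∃ v0 v1 v2 v3 v4 : PElem n1 n2,
      [v0, v1, v2, v3, v4].Pairwise (· ≠ ·) ∧
      ple i1 i2 k' v0 v1 ∧ ple i1 i2 k' v1 v4 ∧
      ple i1 i2 k' v0 v2 ∧ ple i1 i2 k' v2 v3 ∧ ple i1 i2 k' v3 v4 ∧
      psup i1 i2 k' v1 v2 = v4 ∧ pinf i1 i2 k' v1 v2 = v0 ∧
      psup i1 i2 k' v1 v3 = v4 ∧ pinf i1 i2 k' v1 v3 = v0 ∧
      (∀ x ∈ ({v0, v1, v2, v3, v4} : Set (PElem n1 n2)),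
        ∀ y ∈ ({v0, v1, v2, v3, v4} : Set (PElem n1 n2)),
          psup i1 i2 k' x y ∈ ({v0, v1, v2, v3, v4} : Set (PElem n1 n2)) ∧
          pinf i1 i2 k' x y ∈ ({v0, v1, v2, v3, v4} : Set (PElem n1 n2)))) ∧
    ¬ ∀ x y z : PElem n1 n2,
        ple i1 i2 k' x z →
          psup i1 i2 k' x (pinf i1 i2 k' y z) = pinf i1 i2 k' (psup i1 i2 k' x y) z :=
  L2mod_pentagon_not_modular_general n1 n2 i1 i2 k' hn1 hi1 hgap hk3 hkn
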